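/- arXiv:2101.09876 — 7 statements merged into one kernel-verified Lean document; each statement's English description precedes it below -/
import Mathlib

section
/- Let $k \geq 14$ and suppose $W, W'$ are two subsurfaces (witnesses) with $d_W(x,y) > k$ and $d_{W'}(x,y) > k$, where subsurface projection distances satisfy the Behrstock inequality: $d_W(u,\partial W') \geq 10$ implies $d_{W'}(u,\partial W) \leq 4$ for any $u$ projecting to both. Then the following four conditions are equivalent: (1) $d_{W'}(y,\partial W) \geq 10$; (2) $d_W(y,\partial W') \leq 4$; (3) $d_W(x,\partial W') \geq 10$; (4) $d_{W'}(x,\partial W) \leq 4$. -/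
/-- Behrstock-inequality setting: witnesses `Wit` with boundary curves `bd`,
projection distances `d` satisfying symmetry, triangle inequality and the
Behrstock inequality.  For `k ≥ 14` and `d_W(x,y) > k`, `d_{W'}(x,y) > k`,
the four conditions of the order proposition are equivalent. -/
theorem stmt_0
    (Curve Wit : Type*) (d : Wit → Curve → Curve → ℝ) (bd : Wit → Curve)
    (hsymm : ∀ V u v, d V u v = d V v u)
    (htri : ∀ V u v w, d V u w ≤ d V u v + d V v w)
    (hBehrstock : ∀ V V' : Wit, V ≠ V' → ∀ u : Curve,
      10 ≤ d V u (bd V') → d V' u (bd V) ≤ 4)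
    (k : ℝ) (hk : 14 ≤ k)
    (x y : Curve) (W W' : Wit) (hWW' : W ≠ W')
    (hW : k < d W x y) (hW' : k < d W' x y) :
    (10 ≤ d W' y (bd W) ↔ d W y (bd W') ≤ 4) ∧
    (d W y (bd W') ≤ 4 ↔ 10 ≤ d W x (bd W')) ∧
    (10 ≤ d W x (bd W') ↔ d W' x (bd W) ≤ 4) := by
  have h12 : 10 ≤ d W' y (bd W) → d W y (bd W') ≤ 4 := fun h =>
    hBehrstock W' W hWW'.symm y h
  have h23 : d W y (bd W') ≤ 4 → 10 ≤ d W x (bd W') := by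
    intro h
    have := htri W x (bd W') y
    have hs := hsymm W (bd W') y
    linarith
  have h34 : 10 ≤ d W x (bd W') → d W' x (bd W) ≤ 4 := fun h =>
    hBehrstock W W' hWW' x h
  have h41 : d W' x (bd W) ≤ 4 → 10 ≤ d W' y (bd W) := by
    intro h
    have := htri W' y (bd W) x
    have h1 := hsymm W' (bd W) x
    have h2 := hsymm W' x y
    linarith
  exact ⟨⟨h12, fun h => h41 (h34 (h23 h))⟩,
    ⟨h23, fun h => h12 (h41 (h34 h))⟩,
    ⟨h34, fun h => h23 (h12 (h41 h))⟩⟩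
end

section
/- With the hypotheses of the Behrstock inequality setting, for $k \geq 20$ define a relation $<$ on the set $\Omega_k(x,y)$ of witnesses $W$ with $d_W(x,y) > k$, by declaring $W < W'$ whenever $d_{W'}(y,\partial W) \geq 10$ (equivalently, any of the four conditions of the order proposition). Then $<$ is a total order on $\Omega_k(x,y)$: any two distinct elements are comparable, the relation is antisymmetric, and it is transitive. -/
/-- For `k ≥ 20`, the relation `W < W'` iff `d_{W'}(y, ∂W) ≥ 10` is a total
order on `Ω_k(x,y) = {W | d_W(x,y) > k}`: any two distinct elements are
comparable, the relation is antisymmetric, and it is transitive. -/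
theorem stmt_1
    (Curve Wit : Type*) (d : Wit → Curve → Curve → ℝ) (bd : Wit → Curve)
    (hsymm : ∀ V u v, d V u v = d V v u)
    (htri : ∀ V u v w, d V u w ≤ d V u v + d V v w)
    (hBehrstock : ∀ V V' : Wit, V ≠ V' → ∀ u : Curve,
      10 ≤ d V u (bd V') → d V' u (bd V) ≤ 4)
    (k : ℝ) (hk : 20 ≤ k)
    (x y : Curve) :
    -- `Omega` is Ω_k(x,y) and `lt` is the relation `<`
    ∀ (Omega : Set Wit) (lt : Wit → Wit → Prop),
      Omega = {V | k < d V x y} →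
      (∀ V V', (lt V V' ↔ 10 ≤ d V' y (bd V))) →
      -- totality on Ω_k(x,y)
      ((∀ W ∈ Omega, ∀ W' ∈ Omega, W ≠ W' → lt W W' ∨ lt W' W) ∧
      -- antisymmetry
       (∀ W ∈ Omega, ∀ W' ∈ Omega, W ≠ W' → ¬ (lt W W' ∧ lt W' W)) ∧
      -- transitivity
       (∀ W ∈ Omega, ∀ W' ∈ Omega, ∀ W'' ∈ Omega,
         lt W W' → lt W' W'' → lt W W'')) := by
  intro Omega lt hOm hlt
  subst hOm
  have tot : ∀ W ∈ {V | k < d V x y}, ∀ W' ∈ {V | k < d V x y},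
      W ≠ W' → lt W W' ∨ lt W' W := by
    intro W hW W' hW' hne
    replace hW : k < d W x y := hW
    replace hW' : k < d W' x y := hW'
    by_contra h
    push_neg at h
    obtain ⟨h1, h2⟩ := h
    rw [hlt] at h1 h2
    push_neg at h1 h2
    have t1 : d W x y ≤ d W x (bd W') + d W y (bd W') := by
      have := htri W x (bd W') y
      rw [hsymm W (bd W') y] at this
      linarith
    have hx : 10 ≤ d W x (bd W') := by linarith
    have hb := hBehrstock W W' hne x hx
    have t2 : d W' x y ≤ d W' x (bd W) + d W' y (bd W) := by
      have := htri W' x (bd W) y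
      rw [hsymm W' (bd W) y] at this
      linarith
    linarith
  refine ⟨tot, ?_, ?_⟩
  · intro W hW W' hW' hne ⟨h1, h2⟩
    rw [hlt] at h1 h2
    have hb := hBehrstock W' W hne.symm y h1
    linarith
  · intro W hW W' hW' W'' hW'' h1 h2
    replace hW : k < d W x y := hW
    replace hW' : k < d W' x y := hW'
    replace hW'' : k < d W'' x y := hW''
    rw [hlt] at h1 h2 ⊢
    rcases eq_or_ne W W' with rfl | hne1
    · exact h2
    rcases eq_or_ne W' W'' with rfl | hne2
    · exact h1
    rcases eq_or_ne W W'' with rfl | hne3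
    · exfalso
      have hb := hBehrstock W' W hne1.symm y h1
      linarith
    by_contra hc
    push_neg at hc
    have h3 : 10 ≤ d W y (bd W'') := by
      rcases tot W hW W'' hW'' hne3 with h | h
      · rw [hlt] at h; linarith
      · rwa [hlt] at h
    -- d W y (bd W') ≤ 4
    have b1 := hBehrstock W' W hne1.symm y h1
    -- d W' y (bd W'') ≤ 4
    have b2 := hBehrstock W'' W' hne2.symm y h2
    -- d W x (bd W') ≥ 16
    have t1 : d W x y ≤ d W x (bd W') + d W y (bd W') := by
      have := htri W x (bd W') y
      rw [hsymm W (bd W') y] at this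
      linarith
    have hx1 : 10 ≤ d W x (bd W') := by linarith
    -- d W' x (bd W) ≤ 4
    have b3 := hBehrstock W W' hne1 x hx1
    -- d W' x (bd W'') ≥ 16
    have t2 : d W' x y ≤ d W' x (bd W'') + d W' y (bd W'') := by
      have := htri W' x (bd W'') y
      rw [hsymm W' (bd W'') y] at this
      linarith
    -- d W' (bd W'') (bd W) ≥ 10
    have t3 : d W' x (bd W'') ≤ d W' x (bd W) + d W' (bd W'') (bd W) := by
      have := htri W' x (bd W) (bd W'')
      rw [hsymm W' (bd W) (bd W'')] at this
      exact this
    have hbb : 10 ≤ d W' (bd W'') (bd W) := by linarith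
    -- d W (bd W'') (bd W') ≤ 4
    have b4 := hBehrstock W' W hne1.symm (bd W'') hbb
    -- contradiction: d W y (bd W'') ≤ 8
    have t4 : d W y (bd W'') ≤ d W y (bd W') + d W (bd W'') (bd W') := by
      have := htri W y (bd W') (bd W'')
      rw [hsymm W (bd W') (bd W'')] at this
      linarith
    linarith
end

section
/- Let $x, y, u$ be points, and $W < W'$ two witnesses in $\Omega_k(x,y)$ with $k \geq 20$ (ordered as in the total order defined via the Behrstock inequality). If $d_W(u,y) \geq 14$, then $d_{W'}(u,x) \leq 8$. -/
/-- Lemma aux: if `W < W'` in `Ω_k(x,y)` with `k ≥ 20`, and `d_W(u,y) ≥ 14`,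
then `d_{W'}(u,x) ≤ 8`. -/
theorem stmt_2
    (Curve Wit : Type*) (d : Wit → Curve → Curve → ℝ) (bd : Wit → Curve)
    (hsymm : ∀ V u v, d V u v = d V v u)
    (htri : ∀ V u v w, d V u w ≤ d V u v + d V v w)
    (hBehrstock : ∀ V V' : Wit, V ≠ V' → ∀ u : Curve,
      10 ≤ d V u (bd V') → d V' u (bd V) ≤ 4)
    (k : ℝ) (hk : 20 ≤ k)
    (x y u : Curve) (W W' : Wit) (hWW' : W ≠ W')
    (hW : k < d W x y) (hW' : k < d W' x y)
    -- `W < W'` in the total order on Ω_k(x,y)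
    (horder : 10 ≤ d W' y (bd W))
    (hu : 14 ≤ d W u y) :
    d W' u x ≤ 8 := by
  have h1 : d W y (bd W') ≤ 4 := hBehrstock W' W hWW'.symm y horder
  have t1 := htri W u (bd W') y
  have e1 : d W (bd W') y = d W y (bd W') := hsymm ..
  have h2 : 10 ≤ d W u (bd W') := by linarith
  have h3 : d W' u (bd W) ≤ 4 := hBehrstock W W' hWW' u h2
  have t2 := htri W x (bd W') y
  have h4 : 10 ≤ d W x (bd W') := by linarith
  have h5 : d W' x (bd W) ≤ 4 := hBehrstock W W' hWW' x h4
  have t3 := htri W' u (bd W) x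
  have e2 : d W' (bd W) x = d W' x (bd W) := hsymm ..
  linarith
end

section
/- Let $G$ be a connected graph and suppose for each pair of vertices $x,y$ there is an associated connected subgraph $\varsigma(x,y) \subseteq G$ containing $x$ and $y$ such that: (1) for all vertices $x,y,z$, $\varsigma(x,y)$ is contained in the $\epsilon$-neighborhood of $\varsigma(x,z) \cup \varsigma(z,y)$; and (2) whenever $d(x,y) \leq 1$, the diameter of $\varsigma(x,y)$ in $G$ is at most $\epsilon$. Then $G$ is $\delta$-hyperbolic for some $\delta$ depending only on $\epsilon$. -/
open SimpleGraph
variable {V : Type} {G : SimpleGraph V}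

/-- A lazy chain in a graph: consecutive vertices equal or adjacent. -/
def MSBChain (G : SimpleGraph V) (c : ℕ → V) (L : ℕ) : Prop :=
  ∀ i < L, c (i+1) = c i ∨ G.Adj (c i) (c (i+1))

lemma chain_dist (hG : G.Connected) {c : ℕ → V} {L : ℕ} (hc : MSBChain G c L) :
    ∀ j ≤ L, ∀ i ≤ j, G.dist (c i) (c j) ≤ j - i := by
  intro j
  induction j with
  | zero =>
    intro _ i hi
    have : i = 0 := Nat.le_zero.mp hi
    simp [this, SimpleGraph.dist_self]
  | succ j ih =>
    intro hj i hi
    rcases Nat.eq_or_lt_of_le hi with h | h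
    · simp [h, SimpleGraph.dist_self]
    · have hi' : i ≤ j := by omega
      have h1 : G.dist (c i) (c j) ≤ j - i := ih (by omega) i hi'
      have h2 : G.dist (c j) (c (j+1)) ≤ 1 := by
        rcases hc j (by omega) with h' | h'
        · rw [h']; simp [SimpleGraph.dist_self]
        · exact le_of_eq (SimpleGraph.dist_eq_one_iff_adj.mpr h')
      calc G.dist (c i) (c (j+1)) ≤ G.dist (c i) (c j) + G.dist (c j) (c (j+1)) :=
            hG.dist_triangle
        _ ≤ (j - i) + 1 := Nat.add_le_add h1 h2
        _ = j + 1 - i := by omega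

lemma geo_facts (hG : G.Connected) {c : ℕ → V} {n : ℕ} {x y : V}
    (hd : G.dist x y = n) (hc : MSBChain G c n) (h0 : c 0 = x) (hn : c n = y) :
    ∀ i ≤ n, G.dist x (c i) = i ∧ G.dist (c i) y = n - i := by
  intro i hi
  have a : G.dist x (c i) ≤ i := by
    have := chain_dist hG hc i hi 0 (Nat.zero_le _)
    rwa [h0, Nat.sub_zero] at this
  have b : G.dist (c i) y ≤ n - i := by
    have := chain_dist hG hc n le_rfl i hi
    rwa [hn] at this
  have t : n ≤ G.dist x (c i) + G.dist (c i) y := by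
    rw [← hd]; exact hG.dist_triangle
  omega

lemma geo_pair (hG : G.Connected) {c : ℕ → V} {n : ℕ} {x y : V}
    (hd : G.dist x y = n) (hc : MSBChain G c n) (h0 : c 0 = x) (hn : c n = y) :
    ∀ i j, i ≤ j → j ≤ n → j - i ≤ G.dist (c i) (c j) := by
  intro i j hij hj
  have h1 := (geo_facts hG hd hc h0 hn i (hij.trans hj)).1
  have h2 := (geo_facts hG hd hc h0 hn j hj).1
  have t : G.dist x (c j) ≤ G.dist x (c i) + G.dist (c i) (c j) := hG.dist_triangle
  omega

/-- The logarithmic estimate: every point of `S x y` is within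
`K * (clog 2 L + 2)` of any chain of length `L` from `x` to `y`. -/
lemma log_lemma (hG : G.Connected) (S : V → V → Set V) (K : ℕ)
    (h1 : ∀ x y, x ∈ S x y ∧ y ∈ S x y)
    (hslim : ∀ x y z : V, ∀ w ∈ S x y, ∃ w', w' ∈ S x z ∪ S z y ∧ G.dist w w' ≤ K)
    (hdiam : ∀ x y : V, G.dist x y ≤ 1 → ∀ w ∈ S x y, ∀ w' ∈ S x y, G.dist w w' ≤ K) :
    ∀ L : ℕ, ∀ x y : V, ∀ c : ℕ → V, MSBChain G c L → c 0 = x → c L = y →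
      ∀ w ∈ S x y, ∃ j ≤ L, G.dist w (c j) ≤ K * (Nat.clog 2 L + 2) := by
  intro L
  induction L using Nat.strong_induction_on with
  | _ L IH =>
    intro x y c hc h0 hL w hw
    by_cases hL1 : L ≤ 1
    · refine ⟨0, Nat.zero_le _, ?_⟩
      have hxy : G.dist x y ≤ 1 := by
        have := chain_dist hG hc L le_rfl 0 (Nat.zero_le _)
        rw [h0, hL, Nat.sub_zero] at this; omega
      have hx := hdiam x y hxy w hw x (h1 x y).1
      rw [h0]
      calc G.dist w x ≤ K := hx
        _ ≤ K * (Nat.clog 2 L + 2) := by nlinarith [Nat.zero_le (Nat.clog 2 L)]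
    · push_neg at hL1
      set h : ℕ := (L+1)/2 with hh
      have hhL : h < L := by omega
      have hclog : Nat.clog 2 h + 1 = Nat.clog 2 L := by
        rw [Nat.clog_of_two_le (by norm_num) hL1,
          show (L + 2 - 1) / 2 = h by omega]
      obtain ⟨w', hw', hd'⟩ := hslim x y (c h) w hw
      rw [Set.mem_union] at hw'
      rcases hw' with hw' | hw'
      · obtain ⟨j, hj, hdj⟩ := IH h hhL x (c h) c (fun i hi => hc i (by omega)) h0 rfl w' hw'
        refine ⟨j, by omega, ?_⟩
        have tri : G.dist w (c j) ≤ G.dist w w' + G.dist w' (c j) := hG.dist_triangle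
        have : G.dist w (c j) ≤ K + K * (Nat.clog 2 h + 2) := by omega
        calc G.dist w (c j) ≤ K + K * (Nat.clog 2 h + 2) := this
          _ = K * (Nat.clog 2 h + 3) := by ring
          _ = K * (Nat.clog 2 L + 2) := by rw [← hclog]
      · obtain ⟨j, hj, hdj⟩ := IH (L - h) (by omega) (c h) y (fun i => c (h + i))
          (fun i hi => by
            have h' := hc (h + i) (by omega)
            show c (h + (i+1)) = c (h + i) ∨ G.Adj (c (h + i)) (c (h + (i+1)))
            rw [Nat.add_succ]
            exact h')
          rfl (by show c (h + (L - h)) = y; rw [show h + (L - h) = L by omega, hL]) w' hw'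
        refine ⟨h + j, by omega, ?_⟩
        have tri : G.dist w (c (h+j)) ≤ G.dist w w' + G.dist w' (c (h+j)) := hG.dist_triangle
        have hmono : Nat.clog 2 (L - h) ≤ Nat.clog 2 h := Nat.clog_mono_right 2 (by omega)
        have : G.dist w (c (h+j)) ≤ K + K * (Nat.clog 2 h + 2) := by nlinarith
        calc G.dist w (c (h+j)) ≤ K + K * (Nat.clog 2 h + 2) := this
          _ = K * (Nat.clog 2 h + 3) := by ring
          _ = K * (Nat.clog 2 L + 2) := by rw [← hclog]

lemma sq_le_two_pow : ∀ t : ℕ, 8 ≤ t → t * t ≤ 2 ^ (t - 1) := by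
  intro t ht
  induction t with
  | zero => omega
  | succ t ih =>
    rcases Nat.lt_or_ge t 8 with h | h
    · have ht7 : t = 7 := by omega
      subst ht7
      norm_num
    · have h1 := ih (by omega)
      have h2 : 2 * t + 1 ≤ t * t := by nlinarith
      have h3 : 2 ^ (t + 1 - 1) = 2 ^ (t - 1) + 2 ^ (t - 1) := by
        rw [show t + 1 - 1 = (t - 1) + 1 by omega, pow_succ]
        omega
      nlinarith

/-- Key arithmetic estimate. -/
lemma key_arith (K : ℕ) (hK : 1 ≤ K) (R : ℕ) (hR : 2 ^ (11 * K) < R) :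
    K * (Nat.clog 2 (8 * R) + 4) < R := by
  set t := Nat.clog 2 R with hT
  have hRt : R ≤ 2 ^ t := Nat.le_pow_clog (by norm_num) R
  have h11 : 11 * K < t := by
    by_contra hcon
    push_neg at hcon
    have : 2 ^ t ≤ 2 ^ (11 * K) := Nat.pow_le_pow_right (by norm_num) hcon
    omega
  have hclog8 : Nat.clog 2 (8 * R) ≤ t + 3 := by
    rw [Nat.clog_le_iff_le_pow (by norm_num)]
    calc 8 * R ≤ 8 * 2 ^ t := by omega
      _ = 2 ^ (t + 3) := by ring
  have h1 : K * (Nat.clog 2 (8 * R) + 4) ≤ K * (t + 7) := by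
    have := hclog8
    nlinarith
  have h2 : K * (t + 7) ≤ t * t := by nlinarith
  have h3 : t * t ≤ 2 ^ (t - 1) := sq_le_two_pow t (by omega)
  have h4 : 2 ^ (t - 1) < R := Nat.pow_pred_clog_lt_self (by norm_num)
    (by have := Nat.one_le_two_pow (n := 11 * K); omega)
  exact lt_of_le_of_lt (le_trans h1 (le_trans h2 h3)) h4

lemma two_pow_11K_big (K : ℕ) (hK : 1 ≤ K) : 3 * K ≤ 2 ^ (11 * K) := by
  have h : 11 * K < 2 ^ (11 * K) := Nat.lt_two_pow_self (n := 11 * K)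
  omega

/-- Main lemma: every point of `S x y` is within `2^(11K)` of any geodesic chain. -/
lemma morse_lemma (hG : G.Connected) (S : V → V → Set V) (K : ℕ) (hK : 1 ≤ K)
    (h1 : ∀ x y, x ∈ S x y ∧ y ∈ S x y)
    (hslim : ∀ x y z : V, ∀ w ∈ S x y, ∃ w', w' ∈ S x z ∪ S z y ∧ G.dist w w' ≤ K)
    (hdiam : ∀ x y : V, G.dist x y ≤ 1 → ∀ w ∈ S x y, ∀ w' ∈ S x y, G.dist w w' ≤ K) :
    ∀ n : ℕ, ∀ x y : V, ∀ c : ℕ → V, G.dist x y = n → MSBChain G c n → c 0 = x → c n = y →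
      ∀ w ∈ S x y, ∃ i ≤ n, G.dist w (c i) ≤ 2 ^ (11 * K) := by
  intro n
  induction n using Nat.strong_induction_on with
  | _ n IH =>
  intro x y c hd hc h0 hn w hw
  set C := 2 ^ (11 * K) with hC
  have hCK : 3 * K ≤ C := two_pow_11K_big K hK
  by_contra hcon
  push_neg at hcon
  obtain ⟨m, hmmem, hmin⟩ := Finset.exists_min_image (Finset.range (n+1))
      (fun i => G.dist w (c i)) ⟨0, by simp⟩
  rw [Finset.mem_range] at hmmem
  have hm : m ≤ n := by omega
  set R := G.dist w (c m) with hR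
  have hRmin : ∀ i ≤ n, R ≤ G.dist w (c i) := fun i hi =>
    hmin i (Finset.mem_range.mpr (by omega))
  have hRC : C < R := hcon m hm
  have hgf := geo_facts hG hd hc h0 hn
  have hgp := geo_pair hG hd hc h0 hn
  set D := R + 2*K + C + 1 with hD
  set p := m - D with hp
  set q := min n (m + D) with hq
  have hq1 : q ≤ n := min_le_left _ _
  have hq2 : q ≤ m + D := min_le_right _ _
  have hqor : q = n ∨ q = m + D := min_choice n (m + D)
  have hpm : p ≤ m := by omega
  have hmq : m ≤ q := by omega
  have far : ∀ w' : V, G.dist w w' ≤ 2*K → ∀ j, j ≤ n → D ≤ G.dist (c j) (c m) →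
      ¬ (G.dist w' (c j) ≤ C) := by
    intro w' hww' j hj hDj hjC
    have t1 : G.dist (c j) (c m) ≤ G.dist (c j) w' + G.dist w' (c m) := hG.dist_triangle
    have t2 : G.dist w' (c m) ≤ G.dist w' w + G.dist w (c m) := hG.dist_triangle
    have e1 : G.dist (c j) w' = G.dist w' (c j) := SimpleGraph.dist_comm
    have e2 : G.dist w' w = G.dist w w' := SimpleGraph.dist_comm
    omega
  have caseA : ∀ w' : V, w' ∈ S x (c p) → G.dist w w' ≤ 2*K → False := by
    intro w' hw' hww'
    by_cases hp0 : p = 0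
    · rw [hp0, h0] at hw'
      have hd2 : G.dist w' x ≤ K :=
        hdiam x x (by simp [SimpleGraph.dist_self]) w' hw' x (h1 x x).1
      rw [← h0] at hd2
      have hcc := hcon 0 (Nat.zero_le _)
      have tri : G.dist w (c 0) ≤ G.dist w w' + G.dist w' (c 0) := hG.dist_triangle
      omega
    · have hpn : p < n := by omega
      have hdxp : G.dist x (c p) = p := (hgf p (by omega)).1
      obtain ⟨j, hj, hjC⟩ := IH p hpn x (c p) c hdxp (fun i hi => hc i (by omega)) h0 rfl w' hw'
      have hfar : D ≤ G.dist (c j) (c m) := by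
        have := hgp j m (by omega) hm
        omega
      exact far w' hww' j (by omega) hfar hjC
  have caseB : ∀ w' : V, w' ∈ S (c q) y → G.dist w w' ≤ 2*K → False := by
    intro w' hw' hww'
    by_cases hqn' : q = n
    · rw [hqn', hn] at hw'
      have hd2 : G.dist w' y ≤ K :=
        hdiam y y (by simp [SimpleGraph.dist_self]) w' hw' y (h1 y y).1
      rw [← hn] at hd2
      have hcc := hcon n le_rfl
      have tri : G.dist w (c n) ≤ G.dist w w' + G.dist w' (c n) := hG.dist_triangle
      omega
    · have hq3 : q = m + D := by omega
      have hdqy : G.dist (c q) y = n - q := (hgf q hq1).2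
      obtain ⟨j, hj, hjC⟩ := IH (n - q) (by omega) (c q) y (fun i => c (q + i)) hdqy
        (fun i hi => by
          have h' := hc (q + i) (by omega)
          show c (q + (i+1)) = c (q + i) ∨ G.Adj (c (q + i)) (c (q + (i+1)))
          rw [Nat.add_succ]
          exact h')
        (by show c (q + 0) = c q; rw [Nat.add_zero])
        (by show c (q + (n - q)) = y; rw [show q + (n - q) = n by omega, hn]) w' hw'
      have hfar : D ≤ G.dist (c (q + j)) (c m) := by
        have := hgp m (q + j) (by omega) (by omega)
        rw [SimpleGraph.dist_comm]
        omega
      exact far w' hww' (q + j) (by omega) hfar hjC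
  have caseC : ∀ w' : V, w' ∈ S (c p) (c q) → G.dist w w' ≤ 2*K → False := by
    intro w' hw' hww'
    obtain ⟨j, hj, hjK⟩ := log_lemma hG S K h1 hslim hdiam (q - p) (c p) (c q)
      (fun i => c (p + i))
      (fun i hi => by
        have h' := hc (p + i) (by omega)
        show c (p + (i+1)) = c (p + i) ∨ G.Adj (c (p + i)) (c (p + (i+1)))
        rw [Nat.add_succ]
        exact h')
      (by show c (p + 0) = c p; rw [Nat.add_zero])
      (by show c (p + (q - p)) = c q; rw [show p + (q - p) = q by omega])
      w' hw'
    have hRle : R ≤ G.dist w (c (p + j)) := hRmin (p + j) (by omega)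
    have tri : G.dist w (c (p + j)) ≤ G.dist w w' + G.dist w' (c (p + j)) := hG.dist_triangle
    have hL8 : q - p ≤ 8 * R := by omega
    have hmono : Nat.clog 2 (q - p) ≤ Nat.clog 2 (8 * R) := Nat.clog_mono_right 2 hL8
    have hKA : K * (Nat.clog 2 (8 * R) + 4) < R := key_arith K hK R (hC ▸ hRC)
    have h5 : K * (Nat.clog 2 (q - p) + 2) ≤ K * (Nat.clog 2 (8 * R) + 2) :=
      Nat.mul_le_mul_left K (by omega)
    have h7 : K * (Nat.clog 2 (8 * R) + 4) = K * (Nat.clog 2 (8 * R) + 2) + 2 * K := by ring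
    omega
  rcases (by exact hslim x y (c p) w hw : ∃ w', w' ∈ S x (c p) ∪ S (c p) y ∧ G.dist w w' ≤ K)
    with ⟨w1, hw1, hd1⟩
  rw [Set.mem_union] at hw1
  rcases hw1 with hw1 | hw1
  · exact caseA w1 hw1 (by omega)
  · obtain ⟨w2, hw2, hd2⟩ := hslim (c p) y (c q) w1 hw1
    rw [Set.mem_union] at hw2
    have hww2 : G.dist w w2 ≤ 2*K := le_trans (hG.dist_triangle (v := w1)) (by omega)
    rcases hw2 with hw2 | hw2
    · exact caseC w2 hw2 hww2
    · exact caseB w2 hw2 hww2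

/-- Tautness: points of `S x y` nearly lie on geodesics. -/
lemma taut_lemma (hG : G.Connected) (S : V → V → Set V) (K : ℕ) (hK : 1 ≤ K)
    (h1 : ∀ x y, x ∈ S x y ∧ y ∈ S x y)
    (hslim : ∀ x y z : V, ∀ w ∈ S x y, ∃ w', w' ∈ S x z ∪ S z y ∧ G.dist w w' ≤ K)
    (hdiam : ∀ x y : V, G.dist x y ≤ 1 → ∀ w ∈ S x y, ∀ w' ∈ S x y, G.dist w w' ≤ K) :
    ∀ x y : V, ∀ w ∈ S x y, G.dist x w + G.dist w y ≤ G.dist x y + 2 * 2 ^ (11 * K) := by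
  intro x y w hw
  obtain ⟨pw, hpw⟩ := hG.exists_walk_length_eq_dist x y
  set n := G.dist x y with hn
  have hchain : MSBChain G pw.getVert n := by
    intro i hi
    exact Or.inr (pw.adj_getVert_succ (by omega))
  obtain ⟨i, hi, hiC⟩ := morse_lemma hG S K hK h1 hslim hdiam n x y pw.getVert rfl hchain
    (pw.getVert_zero) (by rw [← hpw]; exact pw.getVert_length) w hw
  have d1 : G.dist x (pw.getVert i) ≤ i := by
    have := chain_dist hG hchain i hi 0 (Nat.zero_le _)
    rwa [pw.getVert_zero, Nat.sub_zero] at this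
  have d2 : G.dist (pw.getVert i) y ≤ n - i := by
    have := chain_dist hG hchain n le_rfl i hi
    rwa [show pw.getVert n = y by rw [← hpw]; exact pw.getVert_length] at this
  have t1 : G.dist x w ≤ G.dist x (pw.getVert i) + G.dist (pw.getVert i) w := hG.dist_triangle
  have t2 : G.dist w y ≤ G.dist w (pw.getVert i) + G.dist (pw.getVert i) y := hG.dist_triangle
  have e1 : G.dist (pw.getVert i) w = G.dist w (pw.getVert i) := SimpleGraph.dist_comm
  omega

/-- discrete intermediate value theorem -/
lemma nat_ivt (f : ℕ → ℕ) (N n t : ℕ) (h0 : f 0 = 0) (hN : f N = n)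
    (hstep : ∀ i < N, f (i+1) ≤ f i + 1) (ht : t ≤ n) : ∃ i ≤ N, f i = t := by
  classical
  have hne : ∃ i, i ≤ N ∧ t ≤ f i := ⟨N, le_rfl, by omega⟩
  obtain ⟨hiN, hit⟩ := Nat.find_spec hne
  refine ⟨Nat.find hne, hiN, ?_⟩
  rcases Nat.eq_zero_or_pos (Nat.find hne) with hz | hpos
  · rw [hz] at hit ⊢
    omega
  · have hm := Nat.find_min hne (m := Nat.find hne - 1) (by omega)
    push_neg at hm
    have h4 : f (Nat.find hne - 1) < t := hm (by omega)
    have h3 : f (Nat.find hne) ≤ f (Nat.find hne - 1) + 1 := by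
      have := hstep (Nat.find hne - 1) (by omega)
      rwa [show Nat.find hne - 1 + 1 = Nat.find hne by omega] at this
    omega

/-- Along the connected set `S x y`, every intermediate distance value is attained. -/
lemma exists_at (hG : G.Connected) (S : V → V → Set V)
    (h1 : ∀ x y, x ∈ S x y ∧ y ∈ S x y)
    (h2 : ∀ x y, (G.induce (S x y)).Connected) :
    ∀ x y : V, ∀ t ≤ G.dist x y, ∃ w ∈ S x y, G.dist x w = t := by
  intro x y t ht
  obtain ⟨W⟩ := (h2 x y) ⟨x, (h1 x y).1⟩ ⟨y, (h1 x y).2⟩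
  set f : ℕ → ℕ := fun i => G.dist x ((W.getVert i : {v // v ∈ S x y}) : V) with hf
  have h0 : f 0 = 0 := by simp [hf, W.getVert_zero, SimpleGraph.dist_self]
  have hN : f W.length = G.dist x y := by simp [hf, W.getVert_length]
  have hstep : ∀ i < W.length, f (i+1) ≤ f i + 1 := by
    intro i hi
    have hadj := W.adj_getVert_succ hi
    have hadj' : G.Adj ((W.getVert i : {v // v ∈ S x y}) : V) (W.getVert (i+1) : V) := by
      exact hadj
    have tri : G.dist x (W.getVert (i+1) : V) ≤
        G.dist x (W.getVert i : V) + G.dist (W.getVert i : V) (W.getVert (i+1) : V) :=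
      hG.dist_triangle
    have : G.dist ((W.getVert i : {v // v ∈ S x y}) : V) (W.getVert (i+1) : V) = 1 :=
      SimpleGraph.dist_eq_one_iff_adj.mpr hadj'
    simp only [hf]
    omega
  obtain ⟨i, hi, hit⟩ := nat_ivt f W.length (G.dist x y) t h0 hN hstep ht
  exact ⟨(W.getVert i : V), (W.getVert i).2, hit⟩

/-- Masur–Schleimer/Bowditch hyperbolicity criterion: if a connected graph `G`
admits, for every pair of vertices, a connected subgraph `S x y` containing
`x` and `y` such that these subgraphs form `ε`-slim triangles and have
diameter at most `ε` when `d(x,y) ≤ 1`, then `G` is `δ`-hyperbolic for some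
`δ` depending only on `ε` (hyperbolicity expressed by the Gromov four-point
condition for the path metric). -/
theorem stmt_4 (ε : ℝ) (hε : 0 < ε) :
    ∃ δ : ℝ, 0 < δ ∧
      ∀ (V : Type) (G : SimpleGraph V), G.Connected →
        ∀ S : V → V → Set V,
          (∀ x y, x ∈ S x y ∧ y ∈ S x y) →
          (∀ x y, (G.induce (S x y)).Connected) →
          -- (1) slim triangles of connecting subgraphs
          (∀ x y z : V, ∀ w ∈ S x y, ∃ w' ∈ S x z ∪ S z y, (G.dist w w' : ℝ) ≤ ε) →
          -- (2) bounded diameter for close endpoints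
          (∀ x y : V, G.dist x y ≤ 1 → ∀ w ∈ S x y, ∀ w' ∈ S x y,
            (G.dist w w' : ℝ) ≤ ε) →
          ∀ o x y z : V,
            ((G.dist o x : ℝ) + G.dist o y - G.dist x y) / 2 ≥
              min (((G.dist o x : ℝ) + G.dist o z - G.dist x z) / 2)
                  (((G.dist o z : ℝ) + G.dist o y - G.dist z y) / 2) - δ := by
  set K : ℕ := ⌈ε⌉₊ with hKdef
  have hK : 1 ≤ K := Nat.ceil_pos.mpr hε
  set C : ℕ := 2 ^ (11 * K) with hCdef
  refine ⟨3 * (C : ℝ) + 3 * (K : ℝ) + 1, by positivity, ?_⟩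
  intro V G hG S h1 h2 hslimR hdiamR o x y z
  have hεK : ε ≤ (K : ℝ) := Nat.le_ceil ε
  have hslim : ∀ x y z : V, ∀ w ∈ S x y, ∃ w', w' ∈ S x z ∪ S z y ∧ G.dist w w' ≤ K := by
    intro a b cc w hw
    obtain ⟨w', hw', hd⟩ := hslimR a b cc w hw
    exact ⟨w', hw', by exact_mod_cast hd.trans hεK⟩
  have hdiam : ∀ x y : V, G.dist x y ≤ 1 → ∀ w ∈ S x y, ∀ w' ∈ S x y, G.dist w w' ≤ K := by
    intro a b hab w hw w' hw'
    exact_mod_cast (hdiamR a b hab w hw w' hw').trans hεK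
  have htaut := taut_lemma hG S K hK h1 hslim hdiam
  rw [← hCdef] at htaut  -- make sure it is phrased with C
  -- triangle facts
  have tri1 : G.dist o y ≤ G.dist o x + G.dist x y := hG.dist_triangle
  have tri2 : G.dist o x ≤ G.dist o y + G.dist y x := hG.dist_triangle
  have cxy : G.dist y x = G.dist x y := SimpleGraph.dist_comm
  set s : ℝ := ((G.dist x y : ℝ) + G.dist o x - G.dist o y) / 2 with hsdef
  have hs0 : 0 ≤ s := by
    rw [hsdef]
    have : (G.dist o y : ℝ) ≤ (G.dist o x : ℝ) + (G.dist x y : ℝ) := by exact_mod_cast tri1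
    linarith
  have hsn : s ≤ (G.dist x y : ℝ) := by
    rw [hsdef]
    have : (G.dist o x : ℝ) ≤ (G.dist o y : ℝ) + (G.dist x y : ℝ) := by
      rw [← cxy] at *; exact_mod_cast tri2
    linarith
  set t : ℕ := ⌊s⌋₊ with htdef
  have hts : (t : ℝ) ≤ s := Nat.floor_le hs0
  have hst : s < (t : ℝ) + 1 := Nat.lt_floor_add_one s
  have htn : t ≤ G.dist x y := by
    have : (t : ℝ) ≤ ((G.dist x y : ℕ) : ℝ) := hts.trans hsn
    exact_mod_cast this
  obtain ⟨w, hw, hwt⟩ := exists_at hG S h1 h2 x y t htn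
  obtain ⟨w', hw', hww'⟩ := hslim x y o w hw
  rw [Set.mem_union] at hw'
  have hL2 : (G.dist o w : ℝ) ≤
      ((G.dist o x : ℝ) + G.dist o y - G.dist x y) / 2 + 2*C + 2*K + 1 := by
    rcases hw' with hw' | hw'
    · have ht' := htaut x o w' hw'
      have t3 : G.dist x w ≤ G.dist x w' + G.dist w' w := hG.dist_triangle
      have t4 : G.dist o w ≤ G.dist o w' + G.dist w' w := hG.dist_triangle
      have c1 : G.dist w' w = G.dist w w' := SimpleGraph.dist_comm
      have c2 : G.dist o w' = G.dist w' o := SimpleGraph.dist_comm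
      have c3 : G.dist x o = G.dist o x := SimpleGraph.dist_comm
      have key : G.dist o w + t ≤ G.dist o x + 2*C + 2*K := by omega
      have keyR : (G.dist o w : ℝ) + t ≤ (G.dist o x : ℝ) + 2*C + 2*K := by exact_mod_cast key
      rw [hsdef] at hst
      linarith
    · have ht' := htaut o y w' hw'
      have t3 : G.dist x y ≤ G.dist x w + G.dist w y := hG.dist_triangle
      have t4 : G.dist w y ≤ G.dist w w' + G.dist w' y := hG.dist_triangle
      have t5 : G.dist o w ≤ G.dist o w' + G.dist w' w := hG.dist_triangle
      have c1 : G.dist w' w = G.dist w w' := SimpleGraph.dist_comm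
      have key : G.dist o w + G.dist x y ≤ G.dist o y + 2*C + 2*K + t := by omega
      have keyR : (G.dist o w : ℝ) + G.dist x y ≤ (G.dist o y : ℝ) + 2*C + 2*K + t := by
        exact_mod_cast key
      rw [hsdef] at hts
      linarith
  obtain ⟨w2, hw2, hww2⟩ := hslim x y z w hw
  rw [Set.mem_union] at hw2
  have hmain : ∀ a b : V, w2 ∈ S a b →
      ((G.dist o a : ℝ) + G.dist o b - G.dist a b) / 2 - (C : ℝ) ≤ G.dist o w2 := by
    intro a b hab
    have ht' := htaut a b w2 hab
    have t6 : G.dist o a ≤ G.dist o w2 + G.dist w2 a := hG.dist_triangle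
    have t7 : G.dist o b ≤ G.dist o w2 + G.dist w2 b := hG.dist_triangle
    have c4 : G.dist w2 a = G.dist a w2 := SimpleGraph.dist_comm
    have hsum : G.dist o a + G.dist o b ≤ 2 * G.dist o w2 + G.dist a b + 2*C := by omega
    have hsumR : (G.dist o a : ℝ) + G.dist o b ≤ 2 * G.dist o w2 + G.dist a b + 2*C := by
      exact_mod_cast hsum
    linarith
  have t8 : G.dist o w2 ≤ G.dist o w + G.dist w w2 := hG.dist_triangle
  have t8R : (G.dist o w2 : ℝ) ≤ (G.dist o w : ℝ) + (K : ℝ) := by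
    have : G.dist o w2 ≤ G.dist o w + K := by omega
    exact_mod_cast this
  rw [ge_iff_le]
  rcases hw2 with hw2 | hw2
  · have hmm := hmain x z hw2
    have hminle : min (((G.dist o x : ℝ) + G.dist o z - G.dist x z) / 2)
        (((G.dist o z : ℝ) + G.dist o y - G.dist z y) / 2) ≤
        ((G.dist o x : ℝ) + G.dist o z - G.dist x z) / 2 := min_le_left _ _
    linarith
  · have hmm := hmain z y hw2
    have hminle : min (((G.dist o x : ℝ) + G.dist o z - G.dist x z) / 2)
        (((G.dist o z : ℝ) + G.dist o y - G.dist z y) / 2) ≤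
        ((G.dist o z : ℝ) + G.dist o y - G.dist z y) / 2 := min_le_right _ _
    linarith
end

section
/- Given a survival path $\sigma(x,y)$ with main geodesic $[x,y]$ and a witness $W$ for it, whose witness geodesic segment has endpoints $x'$ and $y'$ (the immediate predecessor and successor of $\partial W$ on $[x,y]$), we have $d_W(x,x') < M$ and $d_W(y,y') < M$, and consequently $|d_W(x',y') - d_W(x,y)| \leq 2M$. -/
/-- Lemma witnessLength: for a survival path with main geodesic
`g 0, …, g n` and witness `W` with `g t = ∂W`, the endpoints
`x' = g (t-1)` and `y' = g (t+1)` of the witness geodesic satisfy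
`d_W(g 0, x') < M`, `d_W(y', g n) < M`, and hence
`|d_W(x',y') - d_W(g 0, g n)| ≤ 2M`. -/
theorem stmt_8
    (Curve Wit : Type*) (G : SimpleGraph Curve)
    (d : Wit → Curve → Curve → ℝ) (bd : Wit → Curve)
    (M : ℝ)
    (hsymm : ∀ V u v, d V u v = d V v u)
    (htri : ∀ V u v w, d V u w ≤ d V u v + d V v w)
    -- Bounded Geodesic Image Theorem for subsegments avoiding ∂W
    (hBGI : ∀ (V : Wit) (a b : ℕ) (g : ℕ → Curve),
      (∀ i j, a ≤ i → i ≤ j → j ≤ b → (G.dist (g i) (g j) : ℝ) = (j : ℝ) - (i : ℝ)) →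
      (∀ i, a ≤ i → i ≤ b → g i ≠ bd V) →
      ∀ i j, a ≤ i → i ≤ b → a ≤ j → j ≤ b → d V (g i) (g j) < M)
    (W : Wit) (n : ℕ) (g : ℕ → Curve)
    (hgeo : ∀ i j, i ≤ j → j ≤ n → (G.dist (g i) (g j) : ℝ) = (j : ℝ) - (i : ℝ))
    (t : ℕ) (ht0 : 1 ≤ t) (htn : t + 1 ≤ n)
    (htW : g t = bd W)
    -- ∂W is the only vertex of the geodesic with empty projection to W
    (honce : ∀ i, i ≤ n → i ≠ t → g i ≠ bd W) :
    d W (g 0) (g (t - 1)) < M ∧ d W (g (t + 1)) (g n) < M ∧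
      |d W (g (t - 1)) (g (t + 1)) - d W (g 0) (g n)| ≤ 2 * M := by
  have h1 : d W (g 0) (g (t - 1)) < M := by
    apply hBGI W 0 (t - 1) g
    · intro i j hi hij hj
      exact hgeo i j hij (le_trans hj (by omega))
    · intro i _ hi
      exact honce i (by omega) (by omega)
    all_goals omega
  have h2 : d W (g (t + 1)) (g n) < M := by
    apply hBGI W (t + 1) n g
    · intro i j hi hij hj
      exact hgeo i j hij hj
    · intro i hi hin
      exact honce i hin (by omega)
    all_goals omega
  refine ⟨h1, h2, ?_⟩
  have ha : d W (g (t - 1)) (g (t + 1)) ≤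
      d W (g (t - 1)) (g 0) + d W (g 0) (g n) + d W (g n) (g (t + 1)) := by
    calc d W (g (t - 1)) (g (t + 1)) ≤ d W (g (t - 1)) (g 0) + d W (g 0) (g (t + 1)) :=
          htri W _ _ _
      _ ≤ d W (g (t - 1)) (g 0) + (d W (g 0) (g n) + d W (g n) (g (t + 1))) := by
          linarith [htri W (g 0) (g n) (g (t + 1))]
      _ = _ := by ring
  have hb : d W (g 0) (g n) ≤
      d W (g 0) (g (t - 1)) + d W (g (t - 1)) (g (t + 1)) + d W (g (t + 1)) (g n) := by
    calc d W (g 0) (g n) ≤ d W (g 0) (g (t - 1)) + d W (g (t - 1)) (g n) := htri W _ _ _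
      _ ≤ d W (g 0) (g (t - 1)) + (d W (g (t - 1)) (g (t + 1)) + d W (g (t + 1)) (g n)) := by
          linarith [htri W (g (t - 1)) (g (t + 1)) (g n)]
      _ = _ := by ring
  have hs1 := hsymm W (g (t - 1)) (g 0)
  have hs2 := hsymm W (g n) (g (t + 1))
  rw [abs_le]
  constructor <;> linarith
end

section
/- For any $x, y$ in the surviving curve complex and any $k > M$, the distance satisfies the upper bound $d^s(x,y) \leq 2k^2 + 2k \sum_{W} \{\{d_W(x,y)\}\}_k$, where the sum is over all witnesses $W$ and $\{\{t\}\}_k$ equals $t$ if $t \geq k$ and $0$ otherwise. -/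
/-- Upper bound of the distance formula: if a survival path from `x` to `y`
exists (main geodesic of length `dS x y`, at most `dS x y / 2` witness
segments, each of length at most `2M + d_W(x,y)`, containing every witness
with `d_W(x,y) ≥ k`), then for `k > M ≥ 8`,
`dˢ(x,y) ≤ 2k² + 2k ∑_W {{d_W(x,y)}}_k`, the sum running over all witnesses
including the surface itself. -/
theorem stmt_10
    (Curve Wit : Type*) [Fintype Wit]
    (ds dS : Curve → Curve → ℝ)
    (d : Wit → Curve → Curve → ℝ)
    (M k : ℝ) (hM : 8 ≤ M) (hk : M < k)
    (x y : Curve)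
    (hnonnegS : 0 ≤ dS x y)
    (hnonneg : ∀ W, 0 ≤ d W x y)
    -- existence of a survival path with the stated properties
    (hsurvival : ∃ s : Finset Wit,
      2 * (s.card : ℝ) ≤ dS x y ∧
      (∀ W, k ≤ d W x y → W ∈ s) ∧
      ds x y ≤ dS x y + ∑ W ∈ s, (2 * M + d W x y)) :
    ds x y ≤ 2 * k ^ 2 + 2 * k * ((if k ≤ dS x y then dS x y else 0) +
      ∑ W : Wit, (if k ≤ d W x y then d W x y else 0)) := by
  classical
  obtain ⟨s, hcard, hmem, hle⟩ := hsurvival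
  have hk0 : (0:ℝ) < k := by linarith
  set s₁ := s.filter (fun W => k ≤ d W x y) with hs₁
  set s₂ := s.filter (fun W => ¬ k ≤ d W x y) with hs₂
  have hsplit : ∑ W ∈ s, (2 * M + d W x y)
      = ∑ W ∈ s₁, (2 * M + d W x y) + ∑ W ∈ s₂, (2 * M + d W x y) :=
    (Finset.sum_filter_add_sum_filter_not s _ _).symm
  have h1 : ∑ W ∈ s₁, (2 * M + d W x y)
      ≤ 2 * k * ∑ W : Wit, (if k ≤ d W x y then d W x y else 0) := by
    have step1 : ∑ W ∈ s₁, (2 * M + d W x y) ≤ ∑ W ∈ s₁, 2 * k * d W x y := by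
      refine Finset.sum_le_sum (fun W hW => ?_)
      have hkd : k ≤ d W x y := (Finset.mem_filter.mp hW).2
      nlinarith
    refine step1.trans ?_
    rw [← Finset.mul_sum]
    refine mul_le_mul_of_nonneg_left ?_ (by linarith)
    calc ∑ W ∈ s₁, d W x y
        = ∑ W ∈ s₁, (if k ≤ d W x y then d W x y else 0) :=
          Finset.sum_congr rfl (fun W hW => by
            simp [(Finset.mem_filter.mp hW).2])
      _ ≤ ∑ W : Wit, (if k ≤ d W x y then d W x y else 0) := by
          refine Finset.sum_le_sum_of_subset_of_nonneg (Finset.subset_univ _)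
            (fun W _ _ => ?_)
          split_ifs
          · exact hnonneg W
          · exact le_rfl
  have hcard2 : (s₂.card : ℝ) ≤ s.card := by
    exact_mod_cast Finset.card_le_card (Finset.filter_subset _ s)
  have h2 : ∑ W ∈ s₂, (2 * M + d W x y) ≤ 3 * k * (dS x y / 2) := by
    have step1 : ∑ W ∈ s₂, (2 * M + d W x y) ≤ s₂.card • (3 * k) := by
      refine Finset.sum_le_card_nsmul _ _ _ (fun W hW => ?_)
      have hkd : ¬ k ≤ d W x y := (Finset.mem_filter.mp hW).2
      push_neg at hkd
      linarith
    rw [nsmul_eq_mul] at step1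
    have : (s₂.card : ℝ) * (3 * k) ≤ (dS x y / 2) * (3 * k) := by
      have : (s₂.card : ℝ) ≤ dS x y / 2 := by linarith
      nlinarith
    linarith
  have h3 : dS x y + 3 * k * (dS x y / 2)
      ≤ 2 * k ^ 2 + 2 * k * (if k ≤ dS x y then dS x y else 0) := by
    split_ifs with h
    · nlinarith
    · push_neg at h
      nlinarith
  have hsum_nonneg : 0 ≤ ∑ W : Wit, (if k ≤ d W x y then d W x y else 0) := by
    refine Finset.sum_nonneg (fun W _ => ?_)
    split_ifs
    · exact hnonneg W
    · exact le_rfl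
  nlinarith [hle, hsplit, h1, h2, h3]
end

section
/- Let $x, y, z$ be three points and $R \geq 2M$. In the Behrstock-inequality setting, there is at most one witness $W \in \Omega_R(x,y,z)$ such that $d_W(x,y) > R/2$, $d_W(x,z) > R/2$, and $d_W(y,z) > R/2$ simultaneously. -/
section Aux
variable {Curve : Type*} {G : SimpleGraph Curve}

lemma aux_exists_geod (hconn : G.Connected) (u v : Curve) :
    ∃ (n : ℕ) (g : ℕ → Curve), g 0 = u ∧ g n = v ∧
      ∀ i j, i ≤ j → j ≤ n → (G.dist (g i) (g j) : ℝ) = (j : ℝ) - (i : ℝ) := by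
  obtain ⟨p, hp⟩ := hconn.exists_walk_length_eq_dist u v
  refine ⟨p.length, p.getVert, p.getVert_zero, p.getVert_length, ?_⟩
  have hub : ∀ i k : ℕ, i + k ≤ p.length → G.dist (p.getVert i) (p.getVert (i + k)) ≤ k := by
    intro i k
    induction k with
    | zero => intro _; simp
    | succ k ih =>
      intro h
      have h1 : i + k < p.length := by omega
      have hadj := p.adj_getVert_succ h1
      have hd1 : G.dist (p.getVert (i + k)) (p.getVert (i + k + 1)) ≤ 1 := by
        have := G.dist_le (SimpleGraph.Walk.cons hadj SimpleGraph.Walk.nil)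
        simpa using this
      calc G.dist (p.getVert i) (p.getVert (i + (k + 1)))
          ≤ G.dist (p.getVert i) (p.getVert (i + k)) +
            G.dist (p.getVert (i + k)) (p.getVert (i + k + 1)) := by
            have := hconn.dist_triangle (u := p.getVert i) (v := p.getVert (i+k))
              (w := p.getVert (i + k + 1))
            simpa [Nat.add_assoc] using this
        _ ≤ k + 1 := by have := ih (by omega); omega
  intro i j hij hjn
  have hub' : G.dist (p.getVert i) (p.getVert j) ≤ j - i := by
    have := hub i (j - i) (by omega)
    rwa [Nat.add_sub_cancel' hij] at this
  have hlb : j - i ≤ G.dist (p.getVert i) (p.getVert j) := by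
    have h1 : G.dist u (p.getVert i) ≤ i := by
      have := hub 0 i (by omega); simpa using this
    have h2 : G.dist (p.getVert j) v ≤ p.length - j := by
      have := hub j (p.length - j) (by omega)
      rwa [Nat.add_sub_cancel' hjn, p.getVert_length] at this
    have t1 : G.dist u v ≤ G.dist u (p.getVert i) + G.dist (p.getVert i) v :=
      hconn.dist_triangle
    have t2 : G.dist (p.getVert i) v ≤
        G.dist (p.getVert i) (p.getVert j) + G.dist (p.getVert j) v :=
      hconn.dist_triangle
    omega
  have : G.dist (p.getVert i) (p.getVert j) = j - i := le_antisymm hub' hlb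
  rw [this, Nat.cast_sub hij]

lemma aux_order (u v a b : Curve)
    (n : ℕ) (g : ℕ → Curve) (h0 : g 0 = u) (hn : g n = v)
    (hg : ∀ i j, i ≤ j → j ≤ n → (G.dist (g i) (g j) : ℝ) = (j : ℝ) - (i : ℝ))
    (i k : ℕ) (hi : i ≤ n) (hk : k ≤ n) (ha : g i = a) (hb : g k = b) :
    ((G.dist u a : ℝ) + G.dist a b = G.dist u b ∧
     (G.dist v b : ℝ) + G.dist a b = G.dist v a) ∨
    ((G.dist u b : ℝ) + G.dist a b = G.dist u a ∧
     (G.dist v a : ℝ) + G.dist a b = G.dist v b) := by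
  have hua : (G.dist u a : ℝ) = i := by
    have := hg 0 i (by omega) hi; rw [h0, ha] at this; simpa using this
  have hub : (G.dist u b : ℝ) = k := by
    have := hg 0 k (by omega) hk; rw [h0, hb] at this; simpa using this
  have hva : (G.dist v a : ℝ) = n - i := by
    have := hg i n hi le_rfl; rw [hn, ha] at this
    rw [SimpleGraph.dist_comm]; exact this
  have hvb : (G.dist v b : ℝ) = n - k := by
    have := hg k n hk le_rfl; rw [hn, hb] at this
    rw [SimpleGraph.dist_comm]; exact this
  rcases le_total i k with h | h
  · left
    have hab : (G.dist a b : ℝ) = k - i := by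
      have := hg i k h hk; rw [ha, hb] at this; exact this
    constructor <;> linarith
  · right
    have hab : (G.dist a b : ℝ) = i - k := by
      have := hg k i h hi; rw [ha, hb] at this
      rw [SimpleGraph.dist_comm]; exact this
    constructor <;> linarith

end Aux

/-- At most one witness in `Ω_R(x,y,z)` has all three pairwise projection
distances greater than `R/2`, when `R ≥ 2M` and boundaries of witnesses with
projection distance `> M` lie on every geodesic between the corresponding
pair of points. -/
theorem stmt_11
    (Curve Wit : Type*) (G : SimpleGraph Curve) (hconn : G.Connected)
    (d : Wit → Curve → Curve → ℝ) (bd : Wit → Curve)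
    (hbdinj : Function.Injective bd)
    (hsymm : ∀ V u v, d V u v = d V v u)
    (htri : ∀ V u v w, d V u w ≤ d V u v + d V v w)
    (M R : ℝ) (hM : 0 < M) (hR : 2 * M ≤ R)
    -- consequence of the Bounded Geodesic Image Theorem
    (hforce : ∀ (V : Wit) (u v : Curve), M < d V u v →
      ∀ (n : ℕ) (g : ℕ → Curve), g 0 = u → g n = v →
        (∀ i j, i ≤ j → j ≤ n → (G.dist (g i) (g j) : ℝ) = (j : ℝ) - (i : ℝ)) →
        ∃ i, i ≤ n ∧ g i = bd V)
    (x y z : Curve) (W W' : Wit)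
    (hWΩ : R < d W x y ∨ R < d W x z ∨ R < d W y z)
    (hW'Ω : R < d W' x y ∨ R < d W' x z ∨ R < d W' y z)
    (hW : R / 2 < d W x y ∧ R / 2 < d W x z ∧ R / 2 < d W y z)
    (hW' : R / 2 < d W' x y ∧ R / 2 < d W' x z ∧ R / 2 < d W' y z) :
    W = W' := by
  by_contra hne
  set a := bd W with ha
  set b := bd W' with hb
  have hab : a ≠ b := fun h => hne (hbdinj h)
  have hDpos : (0 : ℝ) < G.dist a b := by
    exact_mod_cast hconn.pos_dist_of_ne hab
  have hM2 : M ≤ R / 2 := by linarith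
  -- for each pair of points, get the ordering disjunction
  have key : ∀ u v : Curve, M < d W u v → M < d W' u v →
      ((G.dist u a : ℝ) + G.dist a b = G.dist u b ∧
       (G.dist v b : ℝ) + G.dist a b = G.dist v a) ∨
      ((G.dist u b : ℝ) + G.dist a b = G.dist u a ∧
       (G.dist v a : ℝ) + G.dist a b = G.dist v b) := by
    intro u v h1 h2
    obtain ⟨n, g, h0, hn, hg⟩ := aux_exists_geod hconn u v
    obtain ⟨i, hi, hia⟩ := hforce W u v h1 n g h0 hn hg
    obtain ⟨k, hk, hkb⟩ := hforce W' u v h2 n g h0 hn hg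
    exact aux_order u v a b n g h0 hn hg i k hi hk hia hkb
  have kxy := key x y (lt_of_le_of_lt hM2 hW.1) (lt_of_le_of_lt hM2 hW'.1)
  have kxz := key x z (lt_of_le_of_lt hM2 hW.2.1) (lt_of_le_of_lt hM2 hW'.2.1)
  have kyz := key y z (lt_of_le_of_lt hM2 hW.2.2) (lt_of_le_of_lt hM2 hW'.2.2)
  rcases kxy with ⟨h1, h2⟩ | ⟨h1, h2⟩ <;>
    rcases kxz with ⟨h3, h4⟩ | ⟨h3, h4⟩ <;>
      rcases kyz with ⟨h5, h6⟩ | ⟨h5, h6⟩ <;> linarith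
end
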